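/- Claim 4 ('norecursive'): In any run of the Reorg greedy assignment on a tick-schedule, for any three jobs j₁, j₂, j₃ assigned shells at steps s₁, s₂, s₃ respectively, if in the original tick-schedule the last tick of j₁ precedes the first tick of j₂ (l_{j₁} < f_{j₂}) and the last tick of j₂ precedes the first tick of j₃ (l_{j₂} < f_{j₃}), then s₁ < s₃ (strictly). -/
import Mathlib


/-- A tick-schedule on a set `J` of jobs: each job `j` computes its `K` VDF units at
strictly increasing ticks `c j 0 < c j 1 < … < c j (K-1)`, subject to the concurrency
constraint that at every tick `t` at most `b (t / K)` units (over all jobs) are computed,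
where `b` is the per-step capacity (number of shells / Byzantine nodes) and tick `t`
belongs to step `t / K`. -/
structure TickSchedule (K : ℕ) (J : Type*) (b : ℕ → ℕ) where
  /-- there is at least one unit per VDF -/
  hK : 0 < K
  /-- `c j u` is the tick at which the `u`-th unit of job `j`'s VDF is computed -/
  c : J → Fin K → ℕ
  /-- the ticks of each job's units are strictly increasing -/
  strict : ∀ j, StrictMono (c j)
  /-- concurrency: at any tick `t`, at most `b (t / K)` units are computed -/
  conc : ∀ (t : ℕ) (S : Finset (J × Fin K)),
    (∀ p ∈ S, c p.1 p.2 = t) → S.card ≤ b (t / K)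

namespace TickSchedule

variable {K : ℕ} {J : Type*} {b : ℕ → ℕ}

/-- `f j`: the first tick of job `j` (its first Get() call). -/
def f (ts : TickSchedule K J b) (j : J) : ℕ := ts.c j ⟨0, ts.hK⟩

/-- `l j`: the last tick of job `j` (its `K`-th Get() call). -/
def l (ts : TickSchedule K J b) (j : J) : ℕ :=
  ts.c j ⟨K - 1, Nat.sub_lt ts.hK Nat.one_pos⟩

/-- `ρ j`: the release step of job `j`, the step of its first tick. -/
def ρ (ts : TickSchedule K J b) (j : J) : ℕ := ts.f j / K

/-- `δ j`: the deadline step of job `j`, the step of its last tick. -/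
def δ (ts : TickSchedule K J b) (j : J) : ℕ := ts.l j / K

end TickSchedule

/-- Lexicographic order on shells `(step, shell index)`: shell `a` is filled strictly
before shell `b` by the Reorg greedy assignment iff `ShellLt a b`. -/
def ShellLt (a b : ℕ × ℕ) : Prop := a.1 < b.1 ∨ (a.1 = b.1 ∧ a.2 < b.2)

/-- A run of the Reorg greedy assignment (Algorithm 2).  The algorithm processes steps
`s = 0,1,2,…` in order, maintaining a pool `CandidateVDFs`; at step `s` it first adds
to the pool all jobs with release step `ρ j = s`, and then, while a free shell remains
at step `s` (there are `b s` shells) and the pool is nonempty, it removes from the pool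
a job whose last tick is minimal and assigns it the next shell of step `s`.

A run is recorded by the partial assignment `σ` sending each job to the
`(step, shell index)` pair of its shell (`none` if never assigned).  Since steps are
processed in order and shells within a step in order, "job `v` is assigned strictly
before job `w`" is exactly `ShellLt (σ v) (σ w)`.  The fields are the defining
properties of such a run:
* `shell_valid`: only the `b s` shells of step `s` are used;
* `inj`: each shell is assigned to at most one job;
* `release`: a job enters the pool only at its release step, so it can only be
  assigned a shell at step `ρ j` or later;
* `minimal`: when a job is assigned, its last tick is minimal among the jobs then in
  the pool (jobs already released and not yet assigned);
* `noskip`: a shell of step `s` is left free only if the pool was empty at that point,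
  i.e. every job released by step `s` had already been assigned an earlier shell. -/
structure ReorgRun {K : ℕ} {J : Type*} {b : ℕ → ℕ} (ts : TickSchedule K J b) where
  /-- the shell `(step, index)` assigned to each job, if any -/
  σ : J → Option (ℕ × ℕ)
  shell_valid : ∀ j s k, σ j = some (s, k) → k < b s
  inj : ∀ j j' s k, σ j = some (s, k) → σ j' = some (s, k) → j = j'
  release : ∀ j s k, σ j = some (s, k) → ts.ρ j ≤ s
  minimal : ∀ j s k, σ j = some (s, k) → ∀ j', ts.ρ j' ≤ s →
    (σ j' = none ∨ ∃ s' k', σ j' = some (s', k') ∧ ShellLt (s, k) (s', k')) →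
    ts.l j ≤ ts.l j'
  noskip : ∀ s k, k < b s → (∀ j, σ j ≠ some (s, k)) →
    ∀ j, ts.ρ j ≤ s → ∃ s' k', σ j = some (s', k') ∧ ShellLt (s', k') (s, k)

section Aux

variable {K : ℕ} {J : Type*} {b : ℕ → ℕ}

lemma TickSchedule.f_le_c (ts : TickSchedule K J b) (j : J) (u : Fin K) :
    ts.f j ≤ ts.c j u :=
  (ts.strict j).monotone (by simp [Fin.le_def])

lemma TickSchedule.c_le_l (ts : TickSchedule K J b) (j : J) (u : Fin K) :
    ts.c j u ≤ ts.l j :=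
  (ts.strict j).monotone (by simp [Fin.le_def]; omega)

lemma TickSchedule.f_add_le_l (ts : TickSchedule K J b) (j : J) :
    ts.f j + (K - 1) ≤ ts.l j := by
  have key : ∀ (n : ℕ) (h : n < K), ts.c j ⟨0, ts.hK⟩ + n ≤ ts.c j ⟨n, h⟩ := by
    intro n
    induction n with
    | zero => intro h; simp
    | succ m ih =>
      intro h
      have hm : m < K := by omega
      have h1 := ih hm
      have h2 : ts.c j ⟨m, hm⟩ < ts.c j ⟨m + 1, h⟩ :=
        ts.strict j (by simp [Fin.lt_def])
      omega
  exact key (K - 1) (Nat.sub_lt ts.hK Nat.one_pos)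

lemma TickSchedule.rho_mul_le (ts : TickSchedule K J b) (j : J) :
    ts.ρ j * K ≤ ts.f j :=
  Nat.div_mul_le_self _ _

/-- If `l j₁ < f j₂` and `l j₂ < f j₃`, then the deadline step of `j₁` is strictly
before the release step of `j₃`. -/
lemma TickSchedule.delta_lt_rho (ts : TickSchedule K J b) (j₁ j₂ j₃ : J)
    (h₁₂ : ts.l j₁ < ts.f j₂) (h₂₃ : ts.l j₂ < ts.f j₃) :
    ts.δ j₁ < ts.ρ j₃ := by
  have hK := ts.hK
  have hsp := ts.f_add_le_l j₂
  have hf : ts.l j₁ + K ≤ ts.f j₃ := by omega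
  have : (ts.l j₁ + K) / K ≤ ts.f j₃ / K := Nat.div_le_div_right hf
  rw [Nat.add_div_right _ hK] at this
  have : ts.l j₁ / K < ts.f j₃ / K := by omega
  exact this

end Aux

/-- Key lemma: in any Reorg run, every assigned job gets its shell no later than its
deadline step.  Proof by a "busy window" counting argument against the concurrency
constraint. -/
lemma ReorgRun.step_le_delta {K : ℕ} {J : Type*} {b : ℕ → ℕ}
    {ts : TickSchedule K J b} (run : ReorgRun ts) (j : J) (s k : ℕ)
    (h : run.σ j = some (s, k)) : s ≤ ts.δ j := by
  classical
  by_contra hs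
  push_neg at hs
  have hK := ts.hK
  set D := ts.δ j with hD
  -- P r : every shell of every step in [r, D] is filled by a job with l ≤ l j
  set P : ℕ → Prop := fun r => ∀ s' k', r ≤ s' → s' ≤ D → k' < b s' →
      ∃ j', run.σ j' = some (s', k') ∧ ts.l j' ≤ ts.l j with hPdef
  have hPρ : P (ts.ρ j) := by
    intro s' k' hr hsD hk
    by_cases hfill : ∃ j', run.σ j' = some (s', k')
    · obtain ⟨j', hj'⟩ := hfill
      refine ⟨j', hj', ?_⟩
      refine run.minimal j' s' k' hj' j hr (Or.inr ⟨s, k, h, Or.inl ?_⟩)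
      omega
    · push_neg at hfill
      obtain ⟨s'', k'', hσ, hlt⟩ := run.noskip s' k' hk hfill j hr
      rw [h] at hσ
      obtain ⟨rfl, rfl⟩ : s = s'' ∧ k = k'' := by
        have := Option.some.inj hσ; exact ⟨congrArg Prod.fst this, congrArg Prod.snd this⟩
      rcases hlt with hlt | ⟨hlt, _⟩ <;> omega
  have hne : {r | P r}.Nonempty := ⟨ts.ρ j, hPρ⟩
  set r := sInf {r | P r} with hrdef
  have hPr : P r := Nat.sInf_mem hne
  have hrρ : r ≤ ts.ρ j := Nat.sInf_le hPρ
  -- every job assigned in the window with small l was released within the window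
  have hR : ∀ j' s' k', run.σ j' = some (s', k') → r ≤ s' → s' ≤ D →
      ts.l j' ≤ ts.l j → r ≤ ts.ρ j' := by
    intro j' s' k' hσ' hrs hsD hl
    by_contra hρ'
    push_neg at hρ'
    have hr1 : 1 ≤ r := by omega
    have hnP : ¬ P (r - 1) := by
      intro hp
      have hle := Nat.sInf_le (show r - 1 ∈ {r | P r} from hp)
      rw [← hrdef] at hle
      omega
    simp only [hPdef] at hnP
    push_neg at hnP
    obtain ⟨s'', k'', hr'', hD'', hk'', hbad⟩ := hnP
    have hs'' : s'' = r - 1 := by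
      by_contra hne'
      have : r ≤ s'' := by omega
      obtain ⟨j'', hj'', hlj''⟩ := hPr s'' k'' this hD'' hk''
      have := hbad j'' hj''
      omega
    subst hs''
    have hρle : ts.ρ j' ≤ r - 1 := by omega
    by_cases hfill : ∃ j'', run.σ j'' = some (r - 1, k'')
    · obtain ⟨j'', hj''⟩ := hfill
      have hlj'' : ts.l j < ts.l j'' := hbad j'' hj''
      have : ts.l j'' ≤ ts.l j' :=
        run.minimal j'' (r - 1) k'' hj'' j' hρle
          (Or.inr ⟨s', k', hσ', Or.inl (by omega)⟩)
      omega
    · push_neg at hfill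
      obtain ⟨sa, ka, hσa, hlt⟩ := run.noskip (r - 1) k'' hk'' hfill j' hρle
      rw [hσ'] at hσa
      obtain ⟨rfl, rfl⟩ : s' = sa ∧ k' = ka := by
        have := Option.some.inj hσa; exact ⟨congrArg Prod.fst this, congrArg Prod.snd this⟩
      rcases hlt with hlt | ⟨hlt, _⟩ <;> omega
  -- the shells of the busy window
  set Shells : Finset (ℕ × ℕ) :=
    (Finset.Icc r D).biUnion (fun s' => {s'} ×ˢ Finset.range (b s')) with hShellsDef
  have hmemShells : ∀ p : ℕ × ℕ, p ∈ Shells ↔ r ≤ p.1 ∧ p.1 ≤ D ∧ p.2 < b p.1 := by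
    intro p
    simp only [hShellsDef, Finset.mem_biUnion, Finset.mem_Icc, Finset.mem_product,
      Finset.mem_singleton, Finset.mem_range]
    constructor
    · rintro ⟨a, ⟨h1, h2⟩, h3, h4⟩; subst h3; exact ⟨h1, h2, h4⟩
    · rintro ⟨h1, h2, h3⟩; exact ⟨p.1, ⟨h1, h2⟩, rfl, h3⟩
  have hShellsCard : Shells.card = ∑ s' ∈ Finset.Icc r D, b s' := by
    rw [hShellsDef, Finset.card_biUnion]
    · refine Finset.sum_congr rfl fun s' _ => ?_
      simp [Finset.card_product]
    · intro x _ y _ hxy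
      simp only [Finset.disjoint_left, Finset.mem_product, Finset.mem_singleton,
        Finset.mem_range]
      rintro p ⟨rfl, _⟩ ⟨h, _⟩
      exact hxy h
  -- choose a filler for each shell
  set φ : ℕ × ℕ → J := fun p =>
    if hp : ∃ j', run.σ j' = some p ∧ ts.l j' ≤ ts.l j then hp.choose else j with hφdef
  have hφ : ∀ p ∈ Shells, run.σ (φ p) = some p ∧ ts.l (φ p) ≤ ts.l j := by
    intro p hp
    rw [hmemShells] at hp
    obtain ⟨j', hj', hlj'⟩ := hPr p.1 p.2 hp.1 hp.2.1 hp.2.2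
    have hex : ∃ j', run.σ j' = some p ∧ ts.l j' ≤ ts.l j := ⟨j', by simpa using hj', hlj'⟩
    simp only [hφdef, dif_pos hex]
    exact hex.choose_spec
  set JobsF : Finset J := Shells.image φ with hJobsFdef
  have hinj : Set.InjOn φ ↑Shells := by
    intro p hp q hq hpq
    have h1 := (hφ p hp).1
    have h2 := (hφ q hq).1
    rw [hpq, h2] at h1
    exact Option.some.inj h1.symm
  have hJobsFcard : JobsF.card = Shells.card := Finset.card_image_of_injOn hinj
  have hjnot : j ∉ JobsF := by
    intro hj
    obtain ⟨p, hp, hpj⟩ := Finset.mem_image.mp hj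
    have := (hφ p hp).1
    rw [hpj, h] at this
    have hps : s = p.1 := congrArg Prod.fst (Option.some.inj this)
    have := (hmemShells p).mp hp
    omega
  set Jobs : Finset J := insert j JobsF with hJobsdef
  have hJobsCard : Jobs.card = Shells.card + 1 := by
    rw [hJobsdef, Finset.card_insert_of_notMem hjnot, hJobsFcard]
  -- every job in Jobs has release step ≥ r and last tick ≤ l j
  have hJobs : ∀ j' ∈ Jobs, r ≤ ts.ρ j' ∧ ts.l j' ≤ ts.l j := by
    intro j' hj'
    rw [hJobsdef, Finset.mem_insert] at hj'
    rcases hj' with rfl | hj'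
    · exact ⟨hrρ, le_refl _⟩
    · obtain ⟨p, hp, hpj⟩ := Finset.mem_image.mp hj'
      have hσp := (hφ p hp).1
      have hlp := (hφ p hp).2
      rw [hpj] at hσp hlp
      have hpm := (hmemShells p).mp hp
      have hσp' : run.σ j' = some (p.1, p.2) := by simpa using hσp
      exact ⟨hR j' p.1 p.2 hσp' hpm.1 hpm.2.1 hlp, hlp⟩
  -- counting units against capacity
  set T : Finset (J × Fin K) := Jobs ×ˢ (Finset.univ : Finset (Fin K)) with hTdef
  have hTcard : T.card = Jobs.card * K := by
    rw [hTdef, Finset.card_product, Finset.card_univ, Fintype.card_fin]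
  set Ticks : Finset ℕ := Finset.Icc (r * K) (ts.l j) with hTicksDef
  have hmaps : ∀ p ∈ T, ts.c p.1 p.2 ∈ Ticks := by
    rintro ⟨j', u⟩ hp
    rw [hTdef, Finset.mem_product] at hp
    obtain ⟨hρ', hl'⟩ := hJobs j' hp.1
    rw [hTicksDef, Finset.mem_Icc]
    constructor
    · calc r * K ≤ ts.ρ j' * K := Nat.mul_le_mul_right _ hρ'
        _ ≤ ts.f j' := ts.rho_mul_le j'
        _ ≤ ts.c j' u := ts.f_le_c j' u
    · calc ts.c j' u ≤ ts.l j' := ts.c_le_l j' u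
        _ ≤ ts.l j := hl'
  have hcount : T.card ≤ ∑ t ∈ Ticks, b (t / K) := by
    rw [Finset.card_eq_sum_card_fiberwise hmaps]
    refine Finset.sum_le_sum fun t _ => ?_
    exact ts.conc t _ (fun p hp => (Finset.mem_filter.mp hp).2)
  -- capacity of the window's ticks
  have hcap : ∑ t ∈ Ticks, b (t / K) ≤ K * ∑ s' ∈ Finset.Icc r D, b s' := by
    have hmaps2 : ∀ t ∈ Ticks, t / K ∈ Finset.Icc r D := by
      intro t ht
      rw [hTicksDef, Finset.mem_Icc] at ht
      rw [Finset.mem_Icc]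
      constructor
      · exact (Nat.le_div_iff_mul_le hK).mpr ht.1
      · exact Nat.div_le_div_right ht.2
    calc ∑ t ∈ Ticks, b (t / K)
        = ∑ s' ∈ Finset.Icc r D, ∑ t ∈ Ticks.filter (fun t => t / K = s'), b (t / K) :=
          (Finset.sum_fiberwise_of_maps_to hmaps2 _).symm
      _ ≤ ∑ s' ∈ Finset.Icc r D, K * b s' := by
          refine Finset.sum_le_sum fun s' _ => ?_
          have heq : ∑ t ∈ Ticks.filter (fun t => t / K = s'), b (t / K)
              = (Ticks.filter (fun t => t / K = s')).card * b s' := by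
            rw [Finset.sum_congr rfl (fun t ht => by
              rw [(Finset.mem_filter.mp ht).2]), Finset.sum_const, smul_eq_mul]
          rw [heq]
          have hsub : Ticks.filter (fun t => t / K = s') ⊆
              Finset.Ico (s' * K) (s' * K + K) := by
            intro t ht
            have hdiv := (Finset.mem_filter.mp ht).2
            have h1 := Nat.div_add_mod t K
            have h2 := Nat.mod_lt t hK
            rw [hdiv, Nat.mul_comm K s'] at h1
            rw [Finset.mem_Ico]
            omega
          have : (Ticks.filter (fun t => t / K = s')).card ≤ K := by
            calc (Ticks.filter (fun t => t / K = s')).card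
                ≤ (Finset.Ico (s' * K) (s' * K + K)).card := Finset.card_le_card hsub
              _ = K := by rw [Nat.card_Ico]; omega
          exact Nat.mul_le_mul_right _ this
      _ = K * ∑ s' ∈ Finset.Icc r D, b s' := (Finset.mul_sum _ _ _).symm
  -- contradiction
  set M := ∑ s' ∈ Finset.Icc r D, b s' with hM
  have hfinal : (M + 1) * K ≤ K * M := by
    calc (M + 1) * K = Jobs.card * K := by rw [hJobsCard, hShellsCard]
      _ = T.card := hTcard.symm
      _ ≤ ∑ t ∈ Ticks, b (t / K) := hcount
      _ ≤ K * M := hcap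
  rw [add_mul, one_mul, Nat.mul_comm K M] at hfinal
  omega

/-- Claim 4 ('norecursive'): in any run of the Reorg greedy assignment, if jobs
`j₁, j₂, j₃` are assigned shells at steps `s₁, s₂, s₃` respectively, the last tick of
`j₁` precedes the first tick of `j₂`, and the last tick of `j₂` precedes the first
tick of `j₃` (all in the original tick-schedule), then `s₁ < s₃`. -/
theorem reorg_norecursive {K : ℕ} {J : Type*} {b : ℕ → ℕ}
    {ts : TickSchedule K J b} (run : ReorgRun ts)
    (j₁ j₂ j₃ : J) (s₁ k₁ s₂ k₂ s₃ k₃ : ℕ)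
    (h₁ : run.σ j₁ = some (s₁, k₁)) (h₂ : run.σ j₂ = some (s₂, k₂))
    (h₃ : run.σ j₃ = some (s₃, k₃))
    (h₁₂ : ts.l j₁ < ts.f j₂) (h₂₃ : ts.l j₂ < ts.f j₃) :
    s₁ < s₃ := by
  have h1 : s₁ ≤ ts.δ j₁ := run.step_le_delta j₁ s₁ k₁ h₁
  have h2 : ts.δ j₁ < ts.ρ j₃ := ts.delta_lt_rho j₁ j₂ j₃ h₁₂ h₂₃
  have h3 : ts.ρ j₃ ≤ s₃ := run.release j₃ s₃ k₃ h₃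
  omega
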